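/- arXiv:2510.14033 — 3 statements merged into one kernel-verified Lean document; each statement's English description precedes it below -/
import Mathlib

section
/- Let (a_j)_{j∈ℕ} be a sequence of elements of ℓ²(ℕ, ℂ) with components a_{kj}, satisfying Σ_{j=0}^∞ (j + 1)·‖a_j‖² < ∞, where ‖a_j‖² = Σ_k |a_{kj}|². Then the formula (A x)(k, p) = Σ_{q=0}^∞ a_{k, p+q} · x_q defines a continuous (bounded) linear operator A : ℓ²(ℕ, ℂ) → ℓ²(ℕ × ℕ, ℂ), and its operator norm satisfies ‖A‖² ≤ Σ_{j=0}^∞ (j + 1)·‖a_j‖². -/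
/-!
Row `(k, p)` of the block Hankel matrix is the vector `v (k, p) = (conj a_{k, p+q})_q`, so
`(A x)(k, p) = ⟪v (k, p), x⟫` and, by Cauchy–Schwarz in each row, `‖A‖² ≤ Σ_{k,p} ‖v (k, p)‖²`.
This Hilbert–Schmidt sum is `Σ_{k,p,q} |a_{k, p+q}|² = Σ_j (j + 1) ‖a_j‖²`, because the index `j`
is hit by exactly the `j + 1` pairs `(p, q)` with `p + q = j`.
-/

open Finset.HasAntidiagonal
open scoped ComplexConjugate lp

theorem HasSum.sigma_of_nonneg {α : Type*} {β : α → Type*} {f : (Σ x, β x) → ℝ} {g : α → ℝ}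
    {s : ℝ} (hf : 0 ≤ f) (hfg : ∀ x, HasSum (fun y => f ⟨x, y⟩) (g x)) (hg : HasSum g s) :
    HasSum f s := by
  have hsum : Summable f := (summable_sigma_of_nonneg hf).mpr
    ⟨fun x => (hfg x).summable, by simpa only [fun x => (hfg x).tsum_eq] using hg.summable⟩
  exact hg.unique (hsum.hasSum.sigma hfg) ▸ hsum.hasSum

theorem HasSum.prod_of_nonneg {α β : Type*} {f : α × β → ℝ} {g : α → ℝ} {s : ℝ} (hf : 0 ≤ f)
    (hfg : ∀ x, HasSum (fun y => f (x, y)) (g x)) (hg : HasSum g s) : HasSum f s :=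
  (Equiv.sigmaEquivProd α β).hasSum_iff.mp (.sigma_of_nonneg (fun _ => hf _) hfg hg)

theorem HasSum.comp_add_of_nonneg {f : ℕ → ℝ} {s : ℝ} (hf : 0 ≤ f)
    (h : HasSum (fun j : ℕ => ((j : ℝ) + 1) * f j) s) :
    HasSum (fun pq : ℕ × ℕ => f (pq.1 + pq.2)) s := by
  refine (sigmaAntidiagonalEquivProd (A := ℕ)).hasSum_iff.mp
    (.sigma_of_nonneg (fun _ => hf _) (fun j => ?_) h)
  have hconst : ∀ pq : antidiagonal j, f (pq.1.1 + pq.1.2) = f j := fun pq => by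
    rw [mem_antidiagonal.mp pq.2]
  simpa [hconst, Finset.Nat.card_antidiagonal, add_comm (1 : ℝ)] using
    hasSum_fintype (fun _ : antidiagonal j => f j)

theorem lp.hasSum_sq_norm {ι : Type*} {E : ι → Type*} [∀ i, NormedAddCommGroup (E i)]
    (f : lp E 2) : HasSum (fun i => ‖f i‖ ^ 2) (‖f‖ ^ 2) := by
  simpa [Real.rpow_two] using lp.hasSum_norm (p := 2) (by norm_num) f

theorem memℓp_two_iff_summable_sq_norm {ι : Type*} {E : ι → Type*}
    [∀ i, NormedAddCommGroup (E i)] {f : ∀ i, E i} :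
    Memℓp f 2 ↔ Summable fun i => ‖f i‖ ^ 2 := by
  simpa [Real.rpow_two] using memℓp_gen_iff (p := 2) (E := E) (f := f) (by norm_num)

section innerFamily

variable {𝕜 E ι : Type*} [RCLike 𝕜] [NormedAddCommGroup E] [InnerProductSpace 𝕜 E]
  (v : ι → E)

local notation "⟪" x ", " y "⟫" => @inner 𝕜 _ _ x y

theorem sq_norm_inner_le_sq_norm_mul (i : ι) (x : E) :
    ‖⟪v i, x⟫‖ ^ 2 ≤ ‖v i‖ ^ 2 * ‖x‖ ^ 2 := by
  rw [← mul_pow]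
  exact pow_le_pow_left₀ (norm_nonneg _) (norm_inner_le_norm _ _) 2

theorem summable_sq_norm_inner_left (hv : Summable fun i => ‖v i‖ ^ 2) (x : E) :
    Summable fun i => ‖⟪v i, x⟫‖ ^ 2 :=
  .of_nonneg_of_le (fun _ => sq_nonneg _) (sq_norm_inner_le_sq_norm_mul v · x) (hv.mul_right _)

theorem tsum_sq_norm_inner_left_le (hv : Summable fun i => ‖v i‖ ^ 2) (x : E) :
    ∑' i, ‖⟪v i, x⟫‖ ^ 2 ≤ (∑' i, ‖v i‖ ^ 2) * ‖x‖ ^ 2 := by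
  rw [← tsum_mul_right]
  exact (summable_sq_norm_inner_left v hv x).tsum_le_tsum (sq_norm_inner_le_sq_norm_mul v · x)
    (hv.mul_right _)

noncomputable def innerFamilyCLM (hv : Summable fun i => ‖v i‖ ^ 2) : E →L[𝕜] ℓ²(ι, 𝕜) :=
  LinearMap.mkContinuous
    { toFun := fun x => ⟨fun i => ⟪v i, x⟫,
        memℓp_two_iff_summable_sq_norm.mpr (summable_sq_norm_inner_left v hv x)⟩
      map_add' := fun x y => by ext i; exact inner_add_right _ _ _
      map_smul' := fun c x => by ext i; exact inner_smul_right _ _ _ }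
    (√(∑' i, ‖v i‖ ^ 2)) fun x => by
      refine le_of_pow_le_pow_left₀ two_ne_zero (by positivity) ?_
      rw [mul_pow, Real.sq_sqrt (tsum_nonneg fun _ => sq_nonneg _),
        ← (lp.hasSum_sq_norm _).tsum_eq]
      exact tsum_sq_norm_inner_left_le v hv x

theorem innerFamilyCLM_apply (hv : Summable fun i => ‖v i‖ ^ 2) (x : E) (i : ι) :
    innerFamilyCLM v hv x i = ⟪v i, x⟫ :=
  rfl

theorem sq_norm_innerFamilyCLM_le (hv : Summable fun i => ‖v i‖ ^ 2) :
    ‖innerFamilyCLM (𝕜 := 𝕜) v hv‖ ^ 2 ≤ ∑' i, ‖v i‖ ^ 2 :=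
  calc ‖innerFamilyCLM (𝕜 := 𝕜) v hv‖ ^ 2 ≤ √(∑' i, ‖v i‖ ^ 2) ^ 2 :=
        pow_le_pow_left₀ (norm_nonneg _) (LinearMap.mkContinuous_norm_le _ (by positivity) _) 2
    _ = ∑' i, ‖v i‖ ^ 2 := Real.sq_sqrt (tsum_nonneg fun _ => sq_nonneg _)

end innerFamily

theorem hasSum_sq_norm_hankel_entries {ι : Type*} {E : ι → Type*}
    [∀ i, NormedAddCommGroup (E i)] (a : ℕ → lp E 2) {S : ℝ}
    (ha : HasSum (fun j : ℕ => ((j : ℝ) + 1) * ‖a j‖ ^ 2) S) :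
    HasSum (fun x : (ι × ℕ) × ℕ => ‖a (x.1.2 + x.2) x.1.1‖ ^ 2) S := by
  have h : HasSum (fun x : (ℕ × ℕ) × ι => ‖a (x.1.1 + x.1.2) x.2‖ ^ 2) S :=
    .prod_of_nonneg (fun _ => sq_nonneg _) (fun pq => lp.hasSum_sq_norm (a (pq.1 + pq.2)))
      (.comp_add_of_nonneg (f := fun j => ‖a j‖ ^ 2) (fun _ => sq_nonneg _) ha)
  let e : (ℕ × ℕ) × ι ≃ (ι × ℕ) × ℕ :=
    ⟨fun x => ((x.2, x.1.1), x.1.2), fun y => ((y.1.2, y.2), y.1.1), fun _ => rfl, fun _ => rfl⟩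
  exact e.hasSum_iff.mp h

theorem exists_hankel_rows {𝕜 ι : Type*} [RCLike 𝕜] (a : ℕ → ℓ²(ι, 𝕜)) {S : ℝ}
    (ha : HasSum (fun j : ℕ => ((j : ℝ) + 1) * ‖a j‖ ^ 2) S) :
    ∃ v : ι × ℕ → ℓ²(ℕ, 𝕜), (∀ k p q, v (k, p) q = conj (a (p + q) k)) ∧
      HasSum (fun kp => ‖v kp‖ ^ 2) S := by
  have hF := hasSum_sq_norm_hankel_entries a ha
  let v : ι × ℕ → ℓ²(ℕ, 𝕜) := fun kp => ⟨fun q => conj (a (kp.2 + q) kp.1),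
    memℓp_two_iff_summable_sq_norm.mpr (by simpa using hF.summable.prod_factor kp)⟩
  exact ⟨v, fun _ _ _ => rfl,
    hF.prod_fiberwise fun kp => by simpa [v] using lp.hasSum_sq_norm (v kp)⟩

/-- If `Σ_j (j+1)‖a_j‖² < ∞` then the block Hankel matrix
`(A x)(k, p) = Σ_q a_{k, p+q} x_q` defines a bounded linear operator
`A : ℓ²(ℕ, ℂ) → ℓ²(ℕ × ℕ, ℂ)` with `‖A‖² ≤ Σ_j (j+1)‖a_j‖²`. -/
theorem stmt_4 (a : ℕ → lp (fun _ : ℕ => ℂ) 2)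
    (ha : Summable fun j : ℕ => ((j : ℝ) + 1) * ‖a j‖ ^ 2) :
    ∃ A : lp (fun _ : ℕ => ℂ) 2 →L[ℂ] lp (fun _ : ℕ × ℕ => ℂ) 2,
      (∀ (x : lp (fun _ : ℕ => ℂ) 2) (k p : ℕ),
        A x (k, p) = ∑' q : ℕ, a (p + q) k * x q) ∧
      ‖A‖ ^ 2 ≤ ∑' j : ℕ, ((j : ℝ) + 1) * ‖a j‖ ^ 2 := by
  obtain ⟨v, hv, hvS⟩ := exists_hankel_rows a ha.hasSum
  refine ⟨innerFamilyCLM v hvS.summable, fun x k p => ?_,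
    (sq_norm_innerFamilyCLM_le v hvS.summable).trans_eq hvS.tsum_eq⟩
  rw [innerFamilyCLM_apply, lp.inner_eq_tsum]
  simp [hv, mul_comm]
end

section
/- Let (a_j)_{j∈ℕ} be a sequence of elements of ℓ²(ℕ, ℂ) with components a_{kj}, satisfying Σ_{j=0}^∞ (j + 1)·‖a_j‖² < ∞, and let A : ℓ²(ℕ, ℂ) → ℓ²(ℕ × ℕ, ℂ) be the bounded block Hankel operator (A x)(k, p) = Σ_q a_{k, p+q}·x_q. Then the operator Q := A A* on ℓ²(ℕ × ℕ, ℂ) is self-adjoint, compact, and positive (nonnegative), and its matrix entries are given for all k, n ≥ 1 and p, q ≥ 0 by ⟨Q e_{(n,q)}, e_{(k,p)}⟩ = Q_{kn}(p, q) = Σ_{s=0}^∞ a_{k, s+p} · conj(a_{n, s+q}), where the series converges absolutely. -/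
open scoped ComplexConjugate ENNReal
open Filter Topology

/-!
`A A†` is positive, hence self-adjoint, for any bounded `A`. The Hankel structure gives
`(A e_s)(k, p) = a_{k, p+s}`, so `∑_s ‖A e_s‖² = ∑_j (j + 1) ‖a_j‖² < ∞`: `A` is Hilbert–Schmidt,
hence the norm limit of the finite-rank operators `A P_s` (`P_s` the coordinate projections), hence
compact. Finally `A† e_{(n,q)}` is the ℓ² vector `s ↦ conj a_{n, q+s}`, so the entries of `A A†`
are ℓ² pairings of two such vectors and converge absolutely by Hölder's inequality.
-/

theorem Real.summable_mul_and_tsum_mul_le_sqrt_mul_sqrt {ι : Type*} {f g : ι → ℝ}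
    (hf : ∀ i, 0 ≤ f i) (hg : ∀ i, 0 ≤ g i) (hf2 : Summable fun i => f i ^ 2)
    (hg2 : Summable fun i => g i ^ 2) :
    Summable (fun i => f i * g i) ∧ ∑' i, f i * g i ≤ √(∑' i, f i ^ 2) * √(∑' i, g i ^ 2) := by
  simp_rw [← Real.rpow_two, Real.sqrt_eq_rpow] at *
  simpa using Real.summable_and_inner_le_Lp_mul_Lq_tsum_of_nonneg .two_two hf hg hf2 hg2

namespace lp

variable {ι : Type*} {E : ι → Type*} [∀ i, NormedAddCommGroup (E i)]

theorem hasSum_norm_sq (x : lp E 2) : HasSum (fun i => ‖x i‖ ^ 2) (‖x‖ ^ 2) := by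
  simpa using lp.hasSum_norm (p := 2) (by norm_num) x

theorem ofReal_norm_sq_eq_tsum (x : lp E 2) :
    ENNReal.ofReal (‖x‖ ^ 2) = ∑' i, ENNReal.ofReal (‖x i‖ ^ 2) := by
  rw [← (hasSum_norm_sq x).tsum_eq,
    ENNReal.ofReal_tsum_of_nonneg (fun i => by positivity) (hasSum_norm_sq x).summable]

variable [DecidableEq ι] {𝕜 F : Type*} [RCLike 𝕜] [NormedAddCommGroup F] [NormedSpace 𝕜 F]

theorem hasSum_smul_apply_single (T : lp (fun _ : ι => 𝕜) 2 →L[𝕜] F)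
    (x : lp (fun _ : ι => 𝕜) 2) :
    HasSum (fun i => x i • T (lp.single 2 i 1)) (T x) := by
  convert (lp.hasSum_single (p := 2) (by norm_num) x).mapL T using 1
  funext i
  rw [← map_smul, ← lp.single_smul, smul_eq_mul, mul_one]

/-- `T` composed with the coordinate projection onto the span of `lp.single 2 i 1`, `i ∈ s`. -/
noncomputable def truncate (T : lp (fun _ : ι => 𝕜) 2 →L[𝕜] F) (s : Finset ι) :
    lp (fun _ : ι => 𝕜) 2 →L[𝕜] F :=
  ∑ i ∈ s, (ContinuousLinearMap.toSpanSingleton 𝕜 (T (lp.single 2 i 1))).comp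
    (lp.evalCLM 𝕜 (fun _ : ι => 𝕜) 2 i)

theorem truncate_apply (T : lp (fun _ : ι => 𝕜) 2 →L[𝕜] F) (s : Finset ι)
    (x : lp (fun _ : ι => 𝕜) 2) :
    truncate T s x = ∑ i ∈ s, x i • T (lp.single 2 i 1) := by
  simp only [truncate, FunLike.coe_sum, Finset.sum_apply, ContinuousLinearMap.comp_apply,
    ContinuousLinearMap.toSpanSingleton_apply]
  rfl

theorem isCompactOperator_truncate (T : lp (fun _ : ι => 𝕜) 2 →L[𝕜] F) (s : Finset ι) :
    IsCompactOperator (truncate T s) :=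
  (compactOperator _ _ _).sum_mem fun i _ =>
    (isCompactOperator_of_locallyCompactSpace_rng
      (ContinuousLinearMap.toSpanSingleton 𝕜 (T (lp.single 2 i 1)))).comp_clm _

theorem norm_sub_truncate_apply_le (T : lp (fun _ : ι => 𝕜) 2 →L[𝕜] F)
    (hT : Summable fun i => ‖T (lp.single 2 i 1)‖ ^ 2) (s : Finset ι)
    (x : lp (fun _ : ι => 𝕜) 2) :
    ‖T x - truncate T s x‖ ≤ √(∑' i : {i // i ∉ s}, ‖T (lp.single 2 i 1)‖ ^ 2) * ‖x‖ := by
  have htail : HasSum (fun i : {i // i ∉ s} => x i • T (lp.single 2 i 1))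
      (T x - truncate T s x) := by
    refine (s.hasSum_compl_iff (f := fun i => x i • T (lp.single 2 i 1))).2 ?_
    rw [← truncate_apply, sub_add_cancel]
    exact hasSum_smul_apply_single T x
  have hx := (hasSum_norm_sq x).summable.subtype {i | i ∉ s}
  obtain ⟨hsum, hle⟩ := Real.summable_mul_and_tsum_mul_le_sqrt_mul_sqrt
    (fun _ => norm_nonneg _) (fun _ => norm_nonneg _) (hT.subtype {i | i ∉ s}) hx
  calc ‖T x - truncate T s x‖
      ≤ ∑' i : {i // i ∉ s}, ‖T (lp.single 2 i 1)‖ * ‖x i‖ :=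
        htail.norm_le_of_bounded hsum.hasSum fun i => by rw [norm_smul, mul_comm]
    _ ≤ √(∑' i : {i // i ∉ s}, ‖T (lp.single 2 i 1)‖ ^ 2) *
          √(∑' i : {i // i ∉ s}, ‖x i‖ ^ 2) := hle
    _ ≤ √(∑' i : {i // i ∉ s}, ‖T (lp.single 2 i 1)‖ ^ 2) * ‖x‖ := by
        gcongr
        rw [Real.sqrt_le_left (norm_nonneg x), ← (hasSum_norm_sq x).tsum_eq]
        exact Summable.tsum_subtype_le (fun i => ‖x i‖ ^ 2) {i | i ∉ s} (fun _ => by positivity)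
          (hasSum_norm_sq x).summable

theorem tendsto_truncate (T : lp (fun _ : ι => 𝕜) 2 →L[𝕜] F)
    (hT : Summable fun i => ‖T (lp.single 2 i 1)‖ ^ 2) :
    Tendsto (truncate T) atTop (𝓝 T) := by
  have htail : Tendsto (fun s : Finset ι => √(∑' i : {i // i ∉ s}, ‖T (lp.single 2 i 1)‖ ^ 2))
      atTop (𝓝 0) := by
    have := (NNReal.tendsto_coe.2
      (NNReal.tendsto_tsum_compl_atTop_zero fun i => ‖T (lp.single 2 i 1)‖₊ ^ 2)).sqrt
    simpa [NNReal.coe_tsum] using this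
  rw [tendsto_iff_norm_sub_tendsto_zero]
  refine squeeze_zero (fun _ => norm_nonneg _) (fun s => ?_) htail
  rw [norm_sub_rev]
  exact ContinuousLinearMap.opNorm_le_bound _ (Real.sqrt_nonneg _)
    (norm_sub_truncate_apply_le T hT s)

theorem isCompactOperator_of_summable_norm_sq [CompleteSpace F]
    (T : lp (fun _ : ι => 𝕜) 2 →L[𝕜] F)
    (hT : Summable fun i => ‖T (lp.single 2 i 1)‖ ^ 2) : IsCompactOperator T :=
  isCompactOperator_of_tendsto (tendsto_truncate T hT)
    (Eventually.of_forall (isCompactOperator_truncate T))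

theorem adjoint_single_apply {κ : Type*} [DecidableEq κ]
    (T : lp (fun _ : ι => 𝕜) 2 →L[𝕜] lp (fun _ : κ => 𝕜) 2) (j : κ) (i : ι) :
    (ContinuousLinearMap.adjoint T (lp.single 2 j 1)) i = conj (T (lp.single 2 i 1) j) := by
  have := ContinuousLinearMap.adjoint_inner_right T (lp.single 2 i 1) (lp.single 2 j 1)
  simpa [lp.inner_single_left, lp.inner_single_right] using this

end lp

theorem ENNReal.tsum_prod_add (g : ℕ → ℝ≥0∞) :
    ∑' pq : ℕ × ℕ, g (pq.1 + pq.2) = ∑' n : ℕ, (n + 1) * g n := by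
  rw [← Finset.HasAntidiagonal.sigmaAntidiagonalEquivProd.tsum_eq, ENNReal.tsum_sigma']
  refine tsum_congr fun n => ?_
  calc _ = ∑' _ : Finset.HasAntidiagonal.antidiagonal n, g n :=
        tsum_congr fun x => by
          simp [Finset.HasAntidiagonal.mem_antidiagonal.1 x.2]
    _ = (n + 1) * g n := by
        rw [Finset.tsum_subtype _ fun _ => g n, Finset.sum_const,
          Finset.Nat.card_antidiagonal, nsmul_eq_mul]
        push_cast
        rfl

section Hankel

variable {a : ℕ → lp (fun _ : ℕ => ℂ) 2}
  {A : lp (fun _ : ℕ => ℂ) 2 →L[ℂ] lp (fun _ : ℕ × ℕ => ℂ) 2}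

theorem hankel_apply_single (hA : ∀ (x : lp (fun _ : ℕ => ℂ) 2) (k p : ℕ),
      A x (k, p) = ∑' q : ℕ, a (p + q) k * x q) (s k p : ℕ) :
    A (lp.single 2 s 1) (k, p) = a (p + s) k := by
  rw [hA, tsum_eq_single s fun q hq => by simp [hq]]
  simp

theorem hankel_summable_norm_sq_apply_single
    (ha : Summable fun j : ℕ => ((j : ℝ) + 1) * ‖a j‖ ^ 2)
    (hA : ∀ (x : lp (fun _ : ℕ => ℂ) 2) (k p : ℕ),
      A x (k, p) = ∑' q : ℕ, a (p + q) k * x q) :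
    Summable fun s => ‖A (lp.single 2 s 1)‖ ^ 2 := by
  have hsum : ∑' s, ENNReal.ofReal (‖A (lp.single 2 s 1)‖ ^ 2)
      = ENNReal.ofReal (∑' j : ℕ, ((j : ℝ) + 1) * ‖a j‖ ^ 2) := by
    calc ∑' s, ENNReal.ofReal (‖A (lp.single 2 s 1)‖ ^ 2)
        = ∑' s, ∑' kp : ℕ × ℕ, ENNReal.ofReal (‖a (kp.2 + s) kp.1‖ ^ 2) := by
          simp only [lp.ofReal_norm_sq_eq_tsum, hankel_apply_single hA]
      _ = ∑' s, ∑' p, ENNReal.ofReal (‖a (p + s)‖ ^ 2) := by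
          simp only [ENNReal.tsum_prod', lp.ofReal_norm_sq_eq_tsum]
          exact tsum_congr fun s => ENNReal.tsum_comm
      _ = ∑' j : ℕ, (j + 1) * ENNReal.ofReal (‖a j‖ ^ 2) := by
          rw [ENNReal.tsum_comm, ← ENNReal.tsum_prod_add, ENNReal.tsum_prod']
      _ = ENNReal.ofReal (∑' j : ℕ, ((j : ℝ) + 1) * ‖a j‖ ^ 2) := by
          rw [ENNReal.ofReal_tsum_of_nonneg (fun j => by positivity) ha]
          refine tsum_congr fun j => ?_
          rw [ENNReal.ofReal_mul (by positivity)]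
          norm_cast
  have := ENNReal.summable_toReal (hsum ▸ ENNReal.ofReal_ne_top)
  simpa [ENNReal.toReal_ofReal, sq_nonneg] using this

end Hankel

/-- For the bounded block Hankel operator
`(A x)(k,p) = Σ_q a_{k,p+q} x_q` with `Σ_j (j+1)‖a_j‖² < ∞`, the operator
`Q = A A*` is self-adjoint, compact and positive, and its matrix entries are
`⟨Q e_{(n,q)}, e_{(k,p)}⟩ = Σ_s a_{k,s+p} · conj(a_{n,s+q})`, the series
converging absolutely. -/
theorem stmt_6 (a : ℕ → lp (fun _ : ℕ => ℂ) 2)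
    (ha : Summable fun j : ℕ => ((j : ℝ) + 1) * ‖a j‖ ^ 2)
    (A : lp (fun _ : ℕ => ℂ) 2 →L[ℂ] lp (fun _ : ℕ × ℕ => ℂ) 2)
    (hA : ∀ (x : lp (fun _ : ℕ => ℂ) 2) (k p : ℕ),
      A x (k, p) = ∑' q : ℕ, a (p + q) k * x q) :
    IsSelfAdjoint (A ∘L ContinuousLinearMap.adjoint A) ∧
      IsCompactOperator (A ∘L ContinuousLinearMap.adjoint A) ∧
      (A ∘L ContinuousLinearMap.adjoint A).IsPositive ∧
      ∀ k n p q : ℕ,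
        (A ∘L ContinuousLinearMap.adjoint A) (lp.single 2 (n, q) 1) (k, p)
            = ∑' s : ℕ, a (s + p) k * conj (a (s + q) n) ∧
          Summable (fun s : ℕ => ‖a (s + p) k * conj (a (s + q) n)‖) := by
  have hpos := A.isPositive_self_comp_adjoint
  have hcompact : IsCompactOperator A :=
    lp.isCompactOperator_of_summable_norm_sq A (hankel_summable_norm_sq_apply_single ha hA)
  have hadj (n q s : ℕ) :
      ContinuousLinearMap.adjoint A (lp.single 2 (n, q) 1) s = conj (a (s + q) n) := by
    rw [lp.adjoint_single_apply, hankel_apply_single hA, add_comm]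
  refine ⟨hpos.isSelfAdjoint, hcompact.comp_clm _, hpos, fun k n p q => ⟨?_, ?_⟩⟩
  · rw [ContinuousLinearMap.comp_apply, hA]
    exact tsum_congr fun s => by rw [hadj, add_comm p s]
  · have := lp.summable_mul (by norm_num [Real.HolderConjugate.two_two])
      (ContinuousLinearMap.adjoint A (lp.single 2 (k, p) 1))
      (ContinuousLinearMap.adjoint A (lp.single 2 (n, q) 1))
    simpa only [hadj, norm_mul, RCLike.norm_conj] using this
end

section
/- Let (a_j)_{j∈ℕ} be a sequence of elements of ℓ²(ℕ, ℂ) with Σ_{j=0}^∞ (j + 1)·‖a_j‖² < ∞. Let A be the block Hankel operator with blocks A(p, q) = a_{p+q}, A_N its truncation (blocks a_{p+q} for p + q ≤ N, zero otherwise), Q = A A*, and Q_N = A_N A_N*. Then Q_N converges to Q in operator norm as N → ∞, and in particular the operator norms converge: ‖Q_N‖ → ‖Q‖, i.e. ν_N² → ν², where ν_N² = ‖Q_N‖ and ν² = ‖Q‖ are the greatest eigenvalues of the compact positive self-adjoint operators Q_N and Q. -/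
/-!
The kernel of `A - A_N` consists of the blocks `a_j` with `j > N`, and `a_j` occupies the `j + 1`
block positions `(p, q)` with `p + q = j`, so its Hilbert–Schmidt norm is
`(∑_{j > N} (j + 1) ‖a_j‖²)^{1/2}`. This bounds `‖A - A_N‖` and tends to `0`, so `A_N → A` in
operator norm, and `Q_N → Q` by continuity of `T ↦ T ∘ T*`.
-/

open Filter Topology

section lpTwo

variable {ι κ 𝕜 : Type*} [RCLike 𝕜]

theorem lp.hasSum_norm_sq_s10 {E : ι → Type*} [∀ i, NormedAddCommGroup (E i)] (f : lp E 2) :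
    HasSum (fun i => ‖f i‖ ^ 2) (‖f‖ ^ 2) := by
  simpa using lp.hasSum_norm (p := 2) (by norm_num) f

theorem summable_mul_and_norm_tsum_mul_sq_le {u : κ → 𝕜} (hu : Summable fun q => ‖u q‖ ^ 2)
    (x : lp (fun _ : κ => 𝕜) 2) :
    Summable (fun q => u q * x q) ∧ ‖∑' q, u q * x q‖ ^ 2 ≤ (∑' q, ‖u q‖ ^ 2) * ‖x‖ ^ 2 := by
  let v : lp (fun _ : κ => 𝕜) 2 := ⟨fun q => star (u q), memℓp_gen (by simpa using hu)⟩
  have hv : ∀ q, inner 𝕜 (v q) (x q) = u q * x q := fun q => by simp [v, mul_comm]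
  have hnorm : ‖v‖ ^ 2 = ∑' q, ‖u q‖ ^ 2 := by
    simpa [v] using (lp.hasSum_norm_sq_s10 v).tsum_eq.symm
  refine ⟨(lp.summable_inner v x).congr hv, ?_⟩
  rw [← hnorm, ← mul_pow, ← tsum_congr hv, ← lp.inner_eq_tsum]
  exact pow_le_pow_left₀ (norm_nonneg _) (norm_inner_le_norm v x) 2

theorem ContinuousLinearMap.opNorm_le_sqrt_of_apply_eq_tsum_mul
    (T : lp (fun _ : κ => 𝕜) 2 →L[𝕜] lp (fun _ : ι => 𝕜) 2) {K : ι → κ → 𝕜}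
    (hK : Summable fun iq : ι × κ => ‖K iq.1 iq.2‖ ^ 2)
    (hT : ∀ x i, T x i = ∑' q, K i q * x q) :
    ‖T‖ ≤ √(∑' iq : ι × κ, ‖K iq.1 iq.2‖ ^ 2) := by
  obtain ⟨hrow, hrows⟩ := (summable_prod_of_nonneg fun _ => sq_nonneg _).1 hK
  refine T.opNorm_le_bound (Real.sqrt_nonneg _) fun x => ?_
  have hsq : ‖T x‖ ^ 2 ≤ (∑' iq : ι × κ, ‖K iq.1 iq.2‖ ^ 2) * ‖x‖ ^ 2 := by
    rw [hK.tsum_prod' hrow, ← tsum_mul_right]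
    refine hasSum_le (fun i => ?_) (lp.hasSum_norm_sq_s10 (T x)) (hrows.mul_right _).hasSum
    rw [hT]
    exact (summable_mul_and_norm_tsum_mul_sq_le (hrow i) x).2
  rw [← Real.sqrt_sq (norm_nonneg (T x)), ← Real.sqrt_sq (norm_nonneg x),
    ← Real.sqrt_mul' _ (sq_nonneg _)]
  exact Real.sqrt_le_sqrt hsq

end lpTwo

section NonnegSums

open Finset

theorem hasSum_sigma_of_nonneg {α : Type*} {β : α → Type*} {f : (Σ a, β a) → ℝ}
    (hf : ∀ x, 0 ≤ f x) {g : α → ℝ} {s : ℝ} (hg : HasSum g s)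
    (hfg : ∀ a, HasSum (fun b => f ⟨a, b⟩) (g a)) : HasSum f s :=
  hg.sigma_of_hasSum hfg <| (summable_sigma_of_nonneg hf).2
    ⟨fun a => (hfg a).summable, hg.summable.congr fun a => (hfg a).tsum_eq.symm⟩

theorem hasSum_prod_of_nonneg {α β : Type*} {f : α × β → ℝ} (hf : ∀ x, 0 ≤ f x)
    {g : α → ℝ} {s : ℝ} (hg : HasSum g s) (hfg : ∀ a, HasSum (fun b => f (a, b)) (g a)) :
    HasSum f s :=
  (Equiv.sigmaEquivProd α β).hasSum_iff.1 (hasSum_sigma_of_nonneg (fun _ => hf _) hg hfg)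

theorem hasSum_comp_add_of_nonneg {f : ℕ → ℝ} (hf : ∀ n, 0 ≤ f n) {s : ℝ}
    (h : HasSum (fun n : ℕ => ((n : ℝ) + 1) * f n) s) :
    HasSum (fun pq : ℕ × ℕ => f (pq.1 + pq.2)) s := by
  rw [← HasAntidiagonal.sigmaAntidiagonalEquivProd.hasSum_iff]
  refine hasSum_sigma_of_nonneg (fun _ => hf _) h fun n => ?_
  convert hasSum_fintype (fun _ : antidiagonal n => f n) using 1
  · ext c
    simp [mem_antidiagonal.1 c.2]
  · simp

end NonnegSums

section HankelTail

variable {𝕜 : Type*} [RCLike 𝕜] (a : ℕ → lp (fun _ : ℕ => 𝕜) 2)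

/-- The kernel of `A - A_N`: the blocks `a_{p+q}` with `p + q > N`, the row index being `(k, p)`. -/
def hankelTail (N : ℕ) (kp : ℕ × ℕ) (q : ℕ) : 𝕜 :=
  if N < kp.2 + q then a (kp.2 + q) kp.1 else 0

variable {a}

theorem summable_norm_sq_apply_add (ha : Summable fun j => ‖a j‖ ^ 2) (p k : ℕ) :
    Summable fun q => ‖a (p + q) k‖ ^ 2 := by
  have hshift : Summable fun q => ‖a (p + q)‖ ^ 2 := by
    simpa only [add_comm p] using (summable_nat_add_iff p).2 ha
  exact hshift.of_nonneg_of_le (fun _ => sq_nonneg _)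
    fun q => pow_le_pow_left₀ (norm_nonneg _) (lp.norm_apply_le_norm two_ne_zero _ k) 2

theorem hasSum_norm_sq_hankelTail (ha : Summable fun j : ℕ => ((j : ℝ) + 1) * ‖a j‖ ^ 2)
    (N : ℕ) :
    HasSum (fun z : (ℕ × ℕ) × ℕ => ‖hankelTail a N z.1 z.2‖ ^ 2)
      (∑' j : ℕ, ((j : ℝ) + 1) * if N < j then ‖a j‖ ^ 2 else 0) := by
  let g : ℕ → ℝ := fun j => if N < j then ‖a j‖ ^ 2 else 0
  have hg : HasSum (fun j : ℕ => ((j : ℝ) + 1) * g j) (∑' j : ℕ, ((j : ℝ) + 1) * g j) := by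
    refine (ha.of_nonneg_of_le (fun j => ?_) fun j => ?_).hasSum <;>
      by_cases h : N < j <;> simp [g, h] <;> positivity
  have hfiber : ∀ pq : ℕ × ℕ,
      HasSum (fun k => if N < pq.1 + pq.2 then ‖a (pq.1 + pq.2) k‖ ^ 2 else 0) (g (pq.1 + pq.2)) :=
    fun pq => by
      by_cases h : N < pq.1 + pq.2
      · simpa [g, h] using lp.hasSum_norm_sq_s10 (a (pq.1 + pq.2))
      · simp [g, h]
  have hprod := hasSum_prod_of_nonneg
    (f := fun z : (ℕ × ℕ) × ℕ => if N < z.1.1 + z.1.2 then ‖a (z.1.1 + z.1.2) z.2‖ ^ 2 else 0)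
    (fun _ => by positivity) (hasSum_comp_add_of_nonneg (fun j => by positivity) hg) hfiber
  let e : (ℕ × ℕ) × ℕ ≃ (ℕ × ℕ) × ℕ := (Equiv.prodAssoc ℕ ℕ ℕ).trans (Equiv.prodComm _ _)
  convert e.hasSum_iff.2 hprod using 2 with z
  by_cases h : N < z.1.2 + z.2 <;> simp [hankelTail, e, h]

theorem tendsto_tsum_hankelTail_weight (ha : Summable fun j : ℕ => ((j : ℝ) + 1) * ‖a j‖ ^ 2) :
    Tendsto (fun N : ℕ => ∑' j : ℕ, ((j : ℝ) + 1) * if N < j then ‖a j‖ ^ 2 else 0)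
      atTop (𝓝 0) := by
  have hterm : ∀ j : ℕ,
      Tendsto (fun N : ℕ => ((j : ℝ) + 1) * if N < j then ‖a j‖ ^ 2 else 0) atTop (𝓝 0) :=
    fun j => tendsto_const_nhds.congr' <| (eventually_ge_atTop j).mono fun N hN => by
      simp [not_lt.2 hN]
  simpa using tendsto_tsum_of_dominated_convergence ha hterm <| Eventually.of_forall
    fun N j => by
      by_cases h : N < j
      · simp [h, abs_of_nonneg (by positivity : (0 : ℝ) ≤ j + 1)]
      · simp only [h, if_false, mul_zero, norm_zero]
        positivity

section Truncation

variable {A AN : lp (fun _ : ℕ => 𝕜) 2 →L[𝕜] lp (fun _ : ℕ × ℕ => 𝕜) 2}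

theorem sub_apply_eq_tsum_hankelTail (ha : Summable fun j => ‖a j‖ ^ 2)
    (hA : ∀ x k p, A x (k, p) = ∑' q : ℕ, a (p + q) k * x q) {N : ℕ}
    (hAN : ∀ x k p, AN x (k, p) = ∑ q ∈ Finset.range (N + 1 - p), a (p + q) k * x q)
    (x : lp (fun _ : ℕ => 𝕜) 2) (k p : ℕ) :
    (A - AN) x (k, p) = ∑' q, hankelTail a N (k, p) q * x q := by
  have hsum := (summable_mul_and_norm_tsum_mul_sq_le (summable_norm_sq_apply_add ha p k) x).1
  rw [sub_apply, lp.coeFn_sub, Pi.sub_apply, hA, hAN,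
    sum_eq_tsum_indicator, ← hsum.tsum_sub (hsum.indicator _)]
  refine tsum_congr fun q => ?_
  by_cases h : N < p + q
  · simp [hankelTail, h, Set.indicator_of_notMem, show ¬ q < N + 1 - p by omega]
  · simp [hankelTail, h, show q < N + 1 - p by omega]

theorem norm_sub_le_sqrt_tsum_hankelTail_weight
    (ha : Summable fun j : ℕ => ((j : ℝ) + 1) * ‖a j‖ ^ 2)
    (hA : ∀ x k p, A x (k, p) = ∑' q : ℕ, a (p + q) k * x q) {N : ℕ}
    (hAN : ∀ x k p, AN x (k, p) = ∑ q ∈ Finset.range (N + 1 - p), a (p + q) k * x q) :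
    ‖A - AN‖ ≤ √(∑' j : ℕ, ((j : ℝ) + 1) * if N < j then ‖a j‖ ^ 2 else 0) := by
  have ha2 : Summable fun j => ‖a j‖ ^ 2 :=
    ha.of_nonneg_of_le (fun _ => sq_nonneg _) fun j => le_mul_of_one_le_left (sq_nonneg _)
      (by simp)
  rw [← (hasSum_norm_sq_hankelTail ha N).tsum_eq]
  exact (A - AN).opNorm_le_sqrt_of_apply_eq_tsum_mul (hasSum_norm_sq_hankelTail ha N).summable
    fun x ⟨k, p⟩ => sub_apply_eq_tsum_hankelTail ha2 hA hAN x k p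

end Truncation

theorem tendsto_hankel_truncation (ha : Summable fun j : ℕ => ((j : ℝ) + 1) * ‖a j‖ ^ 2)
    {A : lp (fun _ : ℕ => 𝕜) 2 →L[𝕜] lp (fun _ : ℕ × ℕ => 𝕜) 2}
    (hA : ∀ x k p, A x (k, p) = ∑' q : ℕ, a (p + q) k * x q)
    {AN : ℕ → lp (fun _ : ℕ => 𝕜) 2 →L[𝕜] lp (fun _ : ℕ × ℕ => 𝕜) 2}
    (hAN : ∀ N x k p, AN N x (k, p) = ∑ q ∈ Finset.range (N + 1 - p), a (p + q) k * x q) :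
    Tendsto AN atTop (𝓝 A) := by
  rw [tendsto_iff_norm_sub_tendsto_zero]
  have hsqrt := (Real.continuous_sqrt.tendsto 0).comp (tendsto_tsum_hankelTail_weight ha)
  rw [Real.sqrt_zero] at hsqrt
  refine squeeze_zero (fun _ => norm_nonneg _) (fun N => ?_) hsqrt
  rw [norm_sub_rev]
  exact norm_sub_le_sqrt_tsum_hankelTail_weight ha hA (hAN N)

end HankelTail

theorem ContinuousLinearMap.continuous_comp_adjoint {𝕜 E F : Type*} [RCLike 𝕜]
    [NormedAddCommGroup E] [InnerProductSpace 𝕜 E] [CompleteSpace E]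
    [NormedAddCommGroup F] [InnerProductSpace 𝕜 F] [CompleteSpace F] :
    Continuous fun T : E →L[𝕜] F => T ∘L ContinuousLinearMap.adjoint T :=
  continuous_id.clm_comp ContinuousLinearMap.adjoint.continuous

/-- With `A` the block Hankel operator, `A_N` its truncations,
`Q = A A*` and `Q_N = A_N A_N*`, the operators `Q_N` converge to `Q` in operator
norm, and in particular `ν_N² = ‖Q_N‖ → ‖Q‖ = ν²` (the operator norm of a compact
positive self-adjoint operator being its greatest eigenvalue). -/
theorem stmt_10 (a : ℕ → lp (fun _ : ℕ => ℂ) 2)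
    (ha : Summable fun j : ℕ => ((j : ℝ) + 1) * ‖a j‖ ^ 2)
    (A : lp (fun _ : ℕ => ℂ) 2 →L[ℂ] lp (fun _ : ℕ × ℕ => ℂ) 2)
    (hA : ∀ (x : lp (fun _ : ℕ => ℂ) 2) (k p : ℕ),
      A x (k, p) = ∑' q : ℕ, a (p + q) k * x q)
    (AN : ℕ → (lp (fun _ : ℕ => ℂ) 2 →L[ℂ] lp (fun _ : ℕ × ℕ => ℂ) 2))
    (hAN : ∀ (N : ℕ) (x : lp (fun _ : ℕ => ℂ) 2) (k p : ℕ),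
      AN N x (k, p) = ∑ q ∈ Finset.range (N + 1 - p), a (p + q) k * x q) :
    Tendsto
      (fun N : ℕ =>
        ‖AN N ∘L ContinuousLinearMap.adjoint (AN N)
          - A ∘L ContinuousLinearMap.adjoint A‖) atTop (nhds 0) ∧
    Tendsto (fun N : ℕ => ‖AN N ∘L ContinuousLinearMap.adjoint (AN N)‖)
      atTop (nhds ‖A ∘L ContinuousLinearMap.adjoint A‖) := by
  have hQ : Tendsto (fun N => AN N ∘L ContinuousLinearMap.adjoint (AN N)) atTop
      (𝓝 (A ∘L ContinuousLinearMap.adjoint A)) :=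
    (ContinuousLinearMap.continuous_comp_adjoint.tendsto A).comp
      (tendsto_hankel_truncation ha hA hAN)
  exact ⟨tendsto_iff_norm_sub_tendsto_zero.1 hQ, hQ.norm⟩
end
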